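/- Hessian determinant of the β-plane dispersion relation: for every nonzero ξ ∈ ℝ², the function L(ξ) = ξ₁/|ξ|² is smooth near ξ and the determinant of its Hessian matrix satisfies det D²L(ξ) = −4 |ξ|^{−6}. In particular the Hessian is everywhere non-degenerate on ℝ² \ {0}. -/

import Mathlib

/-!
Identify `ℝ²` with `ℂ` via `ξ ↦ z = ξ₁ + ξ₂ i`, so that `L = Re (1/z)`. For holomorphic `f`, the
second derivative of `Re f` in the directions `u, v ∈ ℂ` is `Re (f'' u v)`; in the directions `1, i`
this gives `D²(Re f) = [[Re f'', -Im f''], [-Im f'', -Re f'']]`, of determinant `-|f''|²`.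
For `f = 1/z` we have `f'' = 2/z³`, hence `det D²L(ξ) = -4/|z|⁶ = -4/|ξ|⁶`.
-/

open Complex Filter Topology

/-- The β-plane dispersion relation `L(ξ) = ξ₁/|ξ|²`. -/
noncomputable def Ldisp (x : EuclideanSpace ℝ (Fin 2)) : ℝ := x 0 / ‖x‖ ^ 2

section RealPartOfHolomorphic

variable {E : Type*} [NormedAddCommGroup E] [NormedSpace ℝ E] {f f' : ℂ → ℂ} {f'' : ℂ}
  (φ : E →L[ℝ] ℂ)

theorem fderiv_re_comp_apply {x : E} {c : ℂ} (hf : HasDerivAt f c (φ x)) (v : E) :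
    fderiv ℝ (fun y => (f (φ y)).re) x v = (c * φ v).re := by
  have h : HasFDerivAt (fun y => (f (φ y)).re) _ x :=
    reCLM.hasFDerivAt.comp x ((hf.hasFDerivAt.restrictScalars ℝ).comp x φ.hasFDerivAt)
  rw [h.fderiv]
  simp [mul_comm]

theorem fderiv_fderiv_re_comp_apply {ξ : E} (hf : ∀ᶠ z in 𝓝 (φ ξ), HasDerivAt f (f' z) z)
    (hf' : HasDerivAt f' f'' (φ ξ)) (u v : E) :
    fderiv ℝ (fun x => fderiv ℝ (fun y => (f (φ y)).re) x v) ξ u = (f'' * φ u * φ v).re := by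
  have hfirst : (fun x => fderiv ℝ (fun y => (f (φ y)).re) x v) =ᶠ[𝓝 ξ]
      fun x => (f' (φ x) * φ v).re := by
    filter_upwards [φ.continuous.continuousAt.eventually hf] with x hx
    exact fderiv_re_comp_apply φ hx v
  rw [hfirst.fderiv_eq, fderiv_re_comp_apply φ (hf'.mul_const (φ v)) u]
  ring_nf

end RealPartOfHolomorphic

theorem hasDerivAt_neg_inv_sq {𝕜 : Type*} [NontriviallyNormedField 𝕜] {z : 𝕜} (hz : z ≠ 0) :
    HasDerivAt (fun w => -(w ^ 2)⁻¹) (2 * z⁻¹ ^ 3) z := by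
  refine ((hasDerivAt_pow 2 z).inv (pow_ne_zero 2 hz)).neg.congr_deriv ?_
  field_simp
  ring

theorem det_re_mul_orthonormalBasisOneI (w : ℂ) :
    Matrix.det (Matrix.of fun i j : Fin 2 =>
      (w * orthonormalBasisOneI i * orthonormalBasisOneI j).re) = -‖w‖ ^ 2 := by
  simp [Matrix.det_fin_two, ← normSq_eq_norm_sq, normSq_apply, sub_eq_add_neg, add_comm]

theorem Ldisp_eq_re_inv (x : EuclideanSpace ℝ (Fin 2)) :
    Ldisp x = ((orthonormalBasisOneI.repr.symm x)⁻¹).re := by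
  rw [inv_re, normSq_eq_norm_sq, LinearIsometryEquiv.norm_map]
  simp [Ldisp, orthonormalBasisOneI_repr_symm_apply]

theorem hessian_det_dispersion (ξ : EuclideanSpace ℝ (Fin 2)) (hξ : ξ ≠ 0) :
    ContDiffAt ℝ (⊤ : ℕ∞) Ldisp ξ ∧
      Matrix.det
          (Matrix.of fun i j : Fin 2 =>
            fderiv ℝ (fun x => fderiv ℝ Ldisp x (EuclideanSpace.single j 1)) ξ
              (EuclideanSpace.single i 1)) =
        -4 / ‖ξ‖ ^ 6 := by
  set φ := (orthonormalBasisOneI.repr.symm : EuclideanSpace ℝ (Fin 2) →L[ℝ] ℂ)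
  have hL : Ldisp = fun x => ((φ x)⁻¹).re := funext Ldisp_eq_re_inv
  have hnorm : ‖φ ξ‖ = ‖ξ‖ := orthonormalBasisOneI.repr.symm.norm_map ξ
  have hz : φ ξ ≠ 0 := norm_ne_zero_iff.1 (hnorm ▸ norm_ne_zero_iff.2 hξ)
  refine ⟨hL ▸ reCLM.contDiff.contDiffAt.comp ξ
    ((contDiffAt_inv ℝ hz).comp ξ φ.contDiff.contDiffAt), ?_⟩
  have hinv : ∀ᶠ z in 𝓝 (φ ξ), HasDerivAt Inv.inv (-(z ^ 2)⁻¹) z :=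
    (eventually_ne_nhds hz).mono fun z hz => hasDerivAt_inv hz
  have hbasis (i : Fin 2) : φ (EuclideanSpace.single i 1) = orthonormalBasisOneI i :=
    orthonormalBasisOneI.repr_symm_single i
  simp only [hL, fderiv_fderiv_re_comp_apply φ hinv (hasDerivAt_neg_inv_sq hz), hbasis,
    det_re_mul_orthonormalBasisOneI, norm_mul, norm_pow, norm_inv, hnorm,
    Complex.norm_two]
  ring
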